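/- arXiv:1312.3430 — 2 statements merged into one kernel-verified Lean document; each statement's English description precedes it below -/
import Mathlib

section
/- Let A ∈ X and let D be a set of elements each basic over A. Then d-closure over A restricted to D satisfies the exchange property: if c_1, c_2 ∈ D and c_1 ∈ cl^d(A ∪ {c_2}) \ A, then c_2 ∈ cl^d(A ∪ {c_1}). Hence (D, cl^d(A ∪ ·) ∩ D) is a pregeometry on D. -/
/-! Framework: an integer-valued dimension function on a countable structure `M`,
with automorphism group modelled by a group `G` acting on `M`. -/

/-- An invariant, nonnegative, monotone, submodular integer-valued dimension
function on the finite subsets of `M`, normalised by `d ∅ = 0`. -/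
structure DimFn (M G : Type*) [DecidableEq M] [Group G] [MulAction G M] where
  d : Finset M → ℤ
  invariant : ∀ (g : G) (X : Finset M), d (X.image (fun x => g • x)) = d X
  nonneg : ∀ X : Finset M, 0 ≤ d X
  mono : ∀ ⦃X Y : Finset M⦄, X ⊆ Y → d X ≤ d Y
  submodular : ∀ X Y : Finset M, d (X ∪ Y) ≤ d X + d Y - d (X ∩ Y)
  d_empty : d ∅ = 0

/-- `g` fixes the set `A` pointwise. -/
def Fixes {M : Type*} (G : Type*) [Group G] [MulAction G M] (g : G) (A : Set M) : Prop :=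
  ∀ a ∈ A, g • a = a

/-- The orbit of `a` under the pointwise stabiliser `Aut(M/A)` of `A` in `G`. -/
def orbOver {M : Type*} (G : Type*) [Group G] [MulAction G M] (a : M) (A : Set M) : Set M :=
  {b : M | ∃ g : G, Fixes G g A ∧ g • a = b}

namespace DimFn

variable {M G : Type*} [DecidableEq M] [Group G] [MulAction G M] (D : DimFn M G)

/-- Relative dimension `d(X/Z)` of a finite set over an arbitrary set:
the infimum of `d(X ∪ Y) - d(Y)` over finite `Y ⊆ Z`. -/
noncomputable def drel (X : Finset M) (Z : Set M) : ℤ :=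
  sInf {k : ℤ | ∃ Y : Finset M, ↑Y ⊆ Z ∧ k = D.d (X ∪ Y) - D.d Y}

/-- The `d`-closure `cl^d(Z) = {a : d(a/Z) = 0}`. -/
noncomputable def cld (Z : Set M) : Set M := {a : M | D.drel {a} Z = 0}

/-- Membership in the family `𝒳` of `d`-closures of finite subsets of `M`. -/
def IsClX (A : Set M) : Prop := ∃ X : Finset M, A = D.cld ↑X

/-- `d`-independence `X ⫝^d_B C` of a finite tuple `X` from `C` over `B`. -/
noncomputable def IndepF (X : Finset M) (B C : Set M) : Prop :=
  D.drel X (B ∪ C) = D.drel X B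

/-- `d`-independence `A ⫝^d_B C` for sets. -/
def Indep (A B C : Set M) : Prop := ∀ X : Finset M, ↑X ⊆ A → D.IndepF X B C

/-- `cl^d` subsumes definable closure: any element fixed by every automorphism
fixing `cl^d(X)` pointwise lies in `cl^d(X)`. -/
def SubsumesDcl : Prop :=
  ∀ (X : Finset M) (a : M),
    (∀ g : G, Fixes G g (D.cld ↑X) → g • a = a) → a ∈ D.cld ↑X

/-- Invariance of `⫝^d` under the group action. -/
def InvarianceP : Prop :=
  ∀ (g : G) (A B C : Set M), D.Indep A B C →
    D.Indep ((fun x => g • x) '' A) ((fun x => g • x) '' B) ((fun x => g • x) '' C)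

/-- Monotonicity of `⫝^d`. -/
def MonotonicityP : Prop :=
  ∀ A B C C' : Set M, D.Indep A B (C ∪ C') → D.Indep A B C ∧ D.Indep A (B ∪ C) C'

/-- Transitivity of `⫝^d`. -/
def TransitivityP : Prop :=
  ∀ A B C C' : Set M, D.Indep A B C → D.Indep A (B ∪ C) C' → D.Indep A B (C ∪ C')

/-- Symmetry of `⫝^d`. -/
def SymmetryP : Prop := ∀ A B C : Set M, D.Indep A B C → D.Indep C B A

/-- Compatibility of `⫝^d` with the closure `cl^d`:
`a ⫝_b C ↔ a ⫝_{cl(b)} C` and `a ⫝_B C ↔ cl(a,B) ⫝_B C`. -/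
def CompatibilityP : Prop :=
  (∀ (X b : Finset M) (C : Set M), D.IndepF X ↑b C ↔ D.IndepF X (D.cld ↑b) C) ∧
  (∀ (X : Finset M) (B C : Set M), D.IndepF X B C ↔ D.Indep (D.cld (↑X ∪ B)) B C)

/-- Existence for `⫝^d`: any `A ∈ 𝒳` can be moved by an automorphism fixing `B`
pointwise to be independent from `C` over `B`. -/
def ExistenceP : Prop :=
  ∀ A B C : Set M, D.IsClX A → D.IsClX B → D.IsClX C →
    ∃ g : G, Fixes G g B ∧ D.Indep ((fun x => g • x) '' A) B C

/-- Stationarity for `⫝^d`: if `A₁, A₂ ∈ 𝒳` contain `B`, are independent from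
`C` over `B`, and a partial automorphism (the restriction of some `g ∈ G`)
maps `A₁` onto `A₂` fixing `B` pointwise, then it extends (together with the
identity on `C`) to an automorphism. -/
def StationarityP : Prop :=
  ∀ A₁ A₂ B C : Set M, D.IsClX A₁ → D.IsClX A₂ → D.IsClX B → D.IsClX C →
    B ⊆ A₁ → B ⊆ A₂ → D.Indep A₁ B C → D.Indep A₂ B C →
    ∀ g : G, Fixes G g B → (fun x => g • x) '' A₁ = A₂ →
      ∃ k : G, (∀ x ∈ A₁, k • x = g • x) ∧ Fixes G k C

/-- `b` is basic over `A ∈ 𝒳`. -/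
noncomputable def IsBasic (b : M) (A : Set M) : Prop :=
  b ∉ A ∧ ∀ C : Set M, D.IsClX C → A ⊆ C → D.drel {b} C < D.drel {b} A → b ∈ C

/-- `S` is a basic `Aut(M/A)`-orbit. -/
noncomputable def IsBasicOrbit (S A : Set M) : Prop :=
  ∃ b : M, D.IsBasic b A ∧ S = orbOver G b A

/-- `M` is monodimensional: for every `A ∈ 𝒳` and basic `Aut(M/A)`-orbit `S`
there is `A ⊆ B ∈ 𝒳` with `M = cl^d(B ∪ S)`. -/
noncomputable def Monodimensional : Prop :=
  ∀ A S : Set M, D.IsClX A → D.IsBasicOrbit S A →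
    ∃ B : Set M, D.IsClX B ∧ A ⊆ B ∧ D.cld (B ∪ S) = Set.univ

/-- `g` is bounded over `A ∈ 𝒳`: there are `A ⊆ C ∈ 𝒳` and `b` basic over `C`
such that every `b'` in the `Aut(M/C)`-orbit of `b` lies in `cl^d(C ∪ {g b'})`. -/
noncomputable def BoundedOver (g : G) (A : Set M) : Prop :=
  ∃ C : Set M, D.IsClX C ∧ A ⊆ C ∧
    ∃ b : M, D.IsBasic b C ∧ ∀ b' ∈ orbOver G b C, b' ∈ D.cld (C ∪ {g • b'})

/-- `g` is bounded: bounded over some `A ∈ 𝒳`. -/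
noncomputable def Bounded (g : G) : Prop :=
  ∃ A : Set M, D.IsClX A ∧ D.BoundedOver g A

/-- `g` is `cl^d`-bounded: some `E ∈ 𝒳` is such that `g` stabilises setwise
every `B ∈ 𝒳` containing `E`. -/
noncomputable def ClDBounded (g : G) : Prop :=
  ∃ E : Set M, D.IsClX E ∧
    ∀ B : Set M, D.IsClX B → E ⊆ B → (fun x => g • x) '' B = B

end DimFn

/-! By the chain rule `d(c₁ c₂/A) = d(c₁/A) + d(c₂/A c₁) = d(c₂/A) + d(c₁/A c₂)` and
`d(c₁/A c₂) = 0`, we get `d(c₂/A c₁) = d(c₂/A) - d(c₁/A)`, which is smaller than `d(c₂/A)`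
because `c₁ ∉ A = cl^d(A)`. As `cl^d(A c₁) ∈ 𝒳` and `d(c₂/cl^d(A c₁)) = d(c₂/A c₁)`,
basicness of `c₂` over `A` puts `c₂` in `cl^d(A c₁)`.
The chain rule holds over infinite bases because the infimum defining `d(X/Z)` is attained
at every large enough finite subset of `Z`. -/

namespace DimFn

variable {M G : Type*} [DecidableEq M] [Group G] [MulAction G M] (D : DimFn M G)

lemma drelSet_nonempty (X : Finset M) (Z : Set M) :
    {k : ℤ | ∃ Y : Finset M, ↑Y ⊆ Z ∧ k = D.d (X ∪ Y) - D.d Y}.Nonempty :=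
  ⟨D.d (X ∪ ∅) - D.d ∅, ∅, by simp, rfl⟩

lemma zero_mem_lowerBounds_drelSet (X : Finset M) (Z : Set M) :
    0 ∈ lowerBounds {k : ℤ | ∃ Y : Finset M, ↑Y ⊆ Z ∧ k = D.d (X ∪ Y) - D.d Y} := by
  rintro k ⟨Y, -, rfl⟩
  simpa using D.mono (Finset.subset_union_right (s₁ := X) (s₂ := Y))

lemma drelSet_bddBelow (X : Finset M) (Z : Set M) :
    BddBelow {k : ℤ | ∃ Y : Finset M, ↑Y ⊆ Z ∧ k = D.d (X ∪ Y) - D.d Y} :=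
  ⟨0, D.zero_mem_lowerBounds_drelSet X Z⟩

lemma drel_nonneg (X : Finset M) (Z : Set M) : 0 ≤ D.drel X Z :=
  le_csInf (D.drelSet_nonempty X Z) (D.zero_mem_lowerBounds_drelSet X Z)

lemma drel_le {X Y : Finset M} {Z : Set M} (h : ↑Y ⊆ Z) :
    D.drel X Z ≤ D.d (X ∪ Y) - D.d Y :=
  csInf_le (D.drelSet_bddBelow X Z) ⟨Y, h, rfl⟩

lemma exists_drel_eq (X : Finset M) (Z : Set M) :
    ∃ Y : Finset M, ↑Y ⊆ Z ∧ D.drel X Z = D.d (X ∪ Y) - D.d Y :=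
  Int.csInf_mem (D.drelSet_nonempty X Z) (D.drelSet_bddBelow X Z)

lemma drel_mono_right {X : Finset M} {Z Z' : Set M} (h : Z ⊆ Z') :
    D.drel X Z' ≤ D.drel X Z := by
  obtain ⟨Y, hY, hval⟩ := D.exists_drel_eq X Z
  exact hval ▸ D.drel_le (hY.trans h)

lemma d_union_sub_d_le_of_subset (X : Finset M) {Y Y' : Finset M} (h : Y ⊆ Y') :
    D.d (X ∪ Y') - D.d Y' ≤ D.d (X ∪ Y) - D.d Y := by
  have hsub := D.submodular (X ∪ Y) Y'
  have hunion : X ∪ Y ∪ Y' = X ∪ Y' := by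
    rw [Finset.union_assoc, Finset.union_eq_right.2 h]
  have hinter : D.d Y ≤ D.d ((X ∪ Y) ∩ Y') :=
    D.mono (Finset.subset_inter Finset.subset_union_right h)
  rw [hunion] at hsub
  omega

lemma exists_forall_superset_drel_eq (X : Finset M) (Z : Set M) :
    ∃ Y₀ : Finset M, ↑Y₀ ⊆ Z ∧
      ∀ Y : Finset M, Y₀ ⊆ Y → ↑Y ⊆ Z → D.drel X Z = D.d (X ∪ Y) - D.d Y := by
  obtain ⟨Y₀, hY₀, hval⟩ := D.exists_drel_eq X Z
  refine ⟨Y₀, hY₀, fun Y hY₀Y hY => le_antisymm (D.drel_le hY) ?_⟩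
  exact hval ▸ D.d_union_sub_d_le_of_subset X hY₀Y

lemma drel_union (X Y : Finset M) (Z : Set M) :
    D.drel (X ∪ Y) Z = D.drel X Z + D.drel Y (Z ∪ ↑X) := by
  obtain ⟨U₁, hU₁Z, hU₁⟩ := D.exists_forall_superset_drel_eq X Z
  obtain ⟨U₂, hU₂Z, hU₂⟩ := D.exists_forall_superset_drel_eq (X ∪ Y) Z
  obtain ⟨U₃, hU₃Z, hU₃⟩ := D.exists_forall_superset_drel_eq Y (Z ∪ ↑X)
  set U := U₁ ∪ U₂ ∪ (U₃ \ X)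
  have hUZ : ↑U ⊆ Z := by
    simp only [U, Finset.coe_union, Finset.coe_sdiff, Set.union_subset_iff]
    exact ⟨⟨hU₁Z, hU₂Z⟩, Set.sdiff_subset_iff.2 (Set.union_comm Z _ ▸ hU₃Z)⟩
  have h₁ := hU₁ U (by grind) hUZ
  have h₂ := hU₂ U (by grind) hUZ
  have h₃ := hU₃ (X ∪ U) (by grind) (by grind)
  clear_value U
  rw [h₁, h₂, h₃, Finset.union_left_comm, ← Finset.union_assoc]
  ring

lemma drel_le_drel_union (X Y : Finset M) (Z : Set M) : D.drel X Z ≤ D.drel (X ∪ Y) Z := by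
  rw [D.drel_union]
  linarith [D.drel_nonneg Y (Z ∪ ↑X)]

lemma subset_cld (Z : Set M) : Z ⊆ D.cld Z := by
  intro a ha
  have h := D.drel_le (X := {a}) (Y := {a}) (Z := Z) (by simpa using ha)
  rw [Finset.union_self, sub_self] at h
  exact le_antisymm h (D.drel_nonneg _ _)

lemma cld_mono {Z Z' : Set M} (h : Z ⊆ Z') : D.cld Z ⊆ D.cld Z' := fun _ ha =>
  le_antisymm (ha ▸ D.drel_mono_right h) (D.drel_nonneg _ _)

lemma drel_eq_zero_of_subset_cld {Y : Finset M} {Z : Set M} (h : ↑Y ⊆ D.cld Z) :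
    D.drel Y Z = 0 := by
  induction Y using Finset.induction with
  | empty =>
    exact le_antisymm (by simpa using D.drel_le (X := ∅) (Y := ∅) (Z := Z) (by simp))
      (D.drel_nonneg _ _)
  | insert a Y _ ih =>
    have ha : D.drel {a} Z = 0 := h (by simp)
    have hY : D.drel Y Z = 0 := ih fun x hx => h (by simp [hx])
    have hle : D.drel Y (Z ∪ ↑({a} : Finset M)) ≤ D.drel Y Z :=
      D.drel_mono_right Set.subset_union_left
    rw [Finset.insert_eq, D.drel_union, ha]
    linarith [D.drel_nonneg Y (Z ∪ ↑({a} : Finset M))]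

lemma drel_union_eq_of_subset_cld (X : Finset M) {Y : Finset M} {Z : Set M}
    (h : ↑Y ⊆ D.cld Z) : D.drel X (Z ∪ ↑Y) = D.drel X Z := by
  have hsymm := D.drel_union Y X Z
  rw [Finset.union_comm, D.drel_eq_zero_of_subset_cld h, zero_add] at hsymm
  have hle := D.drel_le_drel_union X Y Z
  have hge := D.drel_mono_right (X := X) (Set.subset_union_left (t := ↑Y) (s := Z))
  omega

lemma drel_cld (X : Finset M) (Z : Set M) : D.drel X (D.cld Z) = D.drel X Z := by
  refine le_antisymm (D.drel_mono_right (D.subset_cld Z)) ?_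
  refine le_csInf (D.drelSet_nonempty X _) ?_
  rintro k ⟨Y, hY, rfl⟩
  rw [← D.drel_union_eq_of_subset_cld X hY]
  exact D.drel_le Set.subset_union_right

lemma cld_cld (Z : Set M) : D.cld (D.cld Z) = D.cld Z := by
  ext a
  change D.drel {a} (D.cld Z) = 0 ↔ D.drel {a} Z = 0
  rw [D.drel_cld]

lemma cld_union_cld_left (Z Z' : Set M) : D.cld (D.cld Z ∪ Z') = D.cld (Z ∪ Z') := by
  refine le_antisymm ?_ (D.cld_mono (Set.union_subset_union_left Z' (D.subset_cld Z)))
  calc D.cld (D.cld Z ∪ Z') ⊆ D.cld (D.cld (Z ∪ Z')) :=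
        D.cld_mono (Set.union_subset (D.cld_mono Set.subset_union_left)
          (Set.subset_union_right.trans (D.subset_cld _)))
    _ = D.cld (Z ∪ Z') := D.cld_cld _

variable {D} in
lemma IsClX.cld_eq {A : Set M} (hA : D.IsClX A) : D.cld A = A := by
  obtain ⟨W, rfl⟩ := hA
  exact D.cld_cld _

variable {D} in
lemma IsClX.cld_union_singleton {A : Set M} (hA : D.IsClX A) (c : M) :
    D.IsClX (D.cld (A ∪ {c})) := by
  obtain ⟨W, rfl⟩ := hA
  exact ⟨insert c W, by rw [cld_union_cld_left, Finset.coe_insert, Set.union_singleton]⟩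

lemma drel_union_singleton_add_of_mem_cld {Z : Set M} {c₁ c₂ : M}
    (h : c₁ ∈ D.cld (Z ∪ {c₂})) :
    D.drel {c₂} (Z ∪ {c₁}) + D.drel {c₁} Z = D.drel {c₂} Z := by
  have h₁₂ := D.drel_union {c₁} {c₂} Z
  have h₂₁ := D.drel_union {c₂} {c₁} Z
  have h₀ : D.drel {c₁} (Z ∪ {c₂}) = 0 := h
  rw [Finset.union_comm, Finset.coe_singleton, h₀] at h₂₁
  rw [Finset.coe_singleton] at h₁₂
  omega

end DimFn

theorem basic_exchange_general {M G : Type*} [DecidableEq M]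
    [Group G] [MulAction G M] (D : DimFn M G)
    (A : Set M) (hA : D.IsClX A) (S : Set M) (hS : ∀ x ∈ S, D.IsBasic x A)
    (c₁ c₂ : M) (hc₂ : c₂ ∈ S)
    (h : c₁ ∈ D.cld (A ∪ {c₂})) (h' : c₁ ∉ A) :
    c₂ ∈ D.cld (A ∪ {c₁}) := by
  have hpos : 0 < D.drel {c₁} A := by
    refine (D.drel_nonneg _ _).lt_of_ne fun h₀ => h' ?_
    rw [← hA.cld_eq]
    exact h₀.symm
  have hdrop : D.drel {c₂} (D.cld (A ∪ {c₁})) < D.drel {c₂} A := by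
    rw [D.drel_cld, ← D.drel_union_singleton_add_of_mem_cld h]
    omega
  exact (hS c₂ hc₂).2 _ (hA.cld_union_singleton c₁)
    (Set.subset_union_left.trans (D.subset_cld _)) hdrop

/-- Let `A ∈ 𝒳` and let `S` be a set of elements each basic
over `A`. Then `d`-closure over `A` restricted to `S` satisfies the exchange
property: if `c₁, c₂ ∈ S` and `c₁ ∈ cl^d(A ∪ {c₂}) \ A`, then
`c₂ ∈ cl^d(A ∪ {c₁})`. (Hence `cl^d(A ∪ ·)` gives a pregeometry on `S`.) -/
theorem basic_exchange {M G : Type*} [Countable M] [DecidableEq M]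
    [Group G] [MulAction G M] (D : DimFn M G)
    (A : Set M) (hA : D.IsClX A) (S : Set M) (hS : ∀ x ∈ S, D.IsBasic x A)
    (c₁ c₂ : M) (hc₁ : c₁ ∈ S) (hc₂ : c₂ ∈ S)
    (h : c₁ ∈ D.cld (A ∪ {c₂})) (h' : c₁ ∉ A) :
    c₂ ∈ D.cld (A ∪ {c₁}) :=
  basic_exchange_general D A hA S hS c₁ c₂ hc₂ h h'
end

section
/- Suppose ⫝ is a stationary independence relation on M compatible with an invariant finitary closure cl that subsumes definable closure, and Aut(M) fixes cl(∅) pointwise. Then the joint embedding property holds for partial automorphisms: if h_i : X_i → Y_i (i = 1, 2) are partial automorphisms with domains and ranges in X, there are f ∈ Aut(M) and a partial automorphism h with f^{-1} h_1 f ⊆ h and h_2 ⊆ h. -/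
/-!
Move the first pair `(X₁, g₁ X₁)` by some `g` so that it becomes independent over `cl ∅` from the
second pair `(X₂, g₂ X₂)` (Existence). Since every automorphism fixes `cl ∅`, Stationarity extends
the conjugate `g g₁ g⁻¹` on `g X₁` to some `k₁` fixing the second pair pointwise, and extends `g₂`
on `X₂` to some `k₂` fixing the moved first pair pointwise. Then `k₁ k₂` does both jobs, with
`f = g⁻¹`.
-/

section IndependenceRelation

variable {M G : Type*} [Group G] [MulAction G M] {cl : Set M → Set M}
  {Indep : Set M → Set M → Set M → Prop}

theorem indep_mono_left
    (hMono : ∀ A B C D : Set M, Indep A B (C ∪ D) → Indep A B C ∧ Indep A (B ∪ C) D)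
    (hSym : ∀ A B C : Set M, Indep A B C → Indep C B A)
    {A A' B C : Set M} (hA : A' ⊆ A) (h : Indep A B C) : Indep A' B C := by
  have h' : Indep C B (A' ∪ A) := by
    rw [Set.union_eq_self_of_subset_left hA]
    exact hSym _ _ _ h
  exact hSym _ _ _ (hMono C B A' A h').1

theorem image_smul_union_image_smul (g h : G) (X : Set M) :
    (fun x => g • x) '' (X ∪ (fun x => h • x) '' X) =
      (fun x => g • x) '' X ∪ (fun x => (g * h * g⁻¹) • x) '' ((fun x => g • x) '' X) := by
  simp only [Set.image_union, Set.image_image, smul_smul, inv_mul_cancel_right]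

theorem exists_smul_eq_on_cl_of_indep_cl_empty
    (clMono : ∀ Z W : Set M, Z ⊆ W → cl Z ⊆ cl W)
    (clInv : ∀ (g : G) (Z : Set M), cl ((fun x => g • x) '' Z) = (fun x => g • x) '' cl Z)
    (hMono : ∀ A B C D : Set M, Indep A B (C ∪ D) → Indep A B C ∧ Indep A (B ∪ C) D)
    (hSym : ∀ A B C : Set M, Indep A B C → Indep C B A)
    (hStat : ∀ A₁ A₂ B C : Set M, (∃ X : Finset M, A₁ = cl ↑X) →
      (∃ X : Finset M, A₂ = cl ↑X) → (∃ X : Finset M, B = cl ↑X) →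
      (∃ X : Finset M, C = cl ↑X) → B ⊆ A₁ → B ⊆ A₂ →
      Indep A₁ B C → Indep A₂ B C →
      ∀ g : G, (∀ x ∈ B, g • x = x) → (fun x => g • x) '' A₁ = A₂ →
        ∃ k : G, (∀ x ∈ A₁, k • x = g • x) ∧ ∀ x ∈ C, k • x = x)
    (hFixClEmpty : ∀ g : G, ∀ x ∈ cl (∅ : Set M), g • x = x)
    (X : Finset M) (g : G) {C : Set M} (hC : ∃ Z : Finset M, C = cl ↑Z)
    (hInd : Indep (cl (↑X ∪ (fun x => g • x) '' ↑X)) (cl ∅) C) :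
    ∃ k : G, (∀ x ∈ cl ↑X, k • x = g • x) ∧ ∀ x ∈ C, k • x = x := by
  classical
  have hEmpty : ∀ Z : Set M, cl ∅ ⊆ cl Z := fun Z => clMono _ _ (Set.empty_subset Z)
  have hX := indep_mono_left hMono hSym (clMono _ _ Set.subset_union_left) hInd
  have hgX := indep_mono_left hMono hSym (clMono _ _ Set.subset_union_right) hInd
  exact hStat _ _ _ _ ⟨X, rfl⟩ ⟨X.image (g • ·), by rw [Finset.coe_image]⟩
    ⟨∅, by rw [Finset.coe_empty]⟩ hC (hEmpty _) (hEmpty _) hX hgX g (hFixClEmpty g)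
    (clInv g X).symm

end IndependenceRelation

theorem partial_automorphism_jep_general {M G : Type*}
    [Group G] [MulAction G M]
    (cl : Set M → Set M)
    (clMono : ∀ Z W : Set M, Z ⊆ W → cl Z ⊆ cl W)
    (clInv : ∀ (g : G) (Z : Set M), cl ((fun x => g • x) '' Z) = (fun x => g • x) '' cl Z)
    (Indep : Set M → Set M → Set M → Prop)
    (hMono : ∀ A B C D : Set M, Indep A B (C ∪ D) → Indep A B C ∧ Indep A (B ∪ C) D)
    (hSym : ∀ A B C : Set M, Indep A B C → Indep C B A)
    (hEx : ∀ A B C : Set M, (∃ X : Finset M, A = cl ↑X) → (∃ X : Finset M, B = cl ↑X) →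
      (∃ X : Finset M, C = cl ↑X) →
      ∃ g : G, (∀ x ∈ B, g • x = x) ∧ Indep ((fun x => g • x) '' A) B C)
    (hStat : ∀ A₁ A₂ B C : Set M, (∃ X : Finset M, A₁ = cl ↑X) →
      (∃ X : Finset M, A₂ = cl ↑X) → (∃ X : Finset M, B = cl ↑X) →
      (∃ X : Finset M, C = cl ↑X) → B ⊆ A₁ → B ⊆ A₂ →
      Indep A₁ B C → Indep A₂ B C →
      ∀ g : G, (∀ x ∈ B, g • x = x) → (fun x => g • x) '' A₁ = A₂ →
        ∃ k : G, (∀ x ∈ A₁, k • x = g • x) ∧ ∀ x ∈ C, k • x = x)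
    (hFixClEmpty : ∀ g : G, ∀ x ∈ cl (∅ : Set M), g • x = x)
    (X₁ X₂ : Set M)
    (hX₁ : ∃ X : Finset M, X₁ = cl ↑X) (hX₂ : ∃ X : Finset M, X₂ = cl ↑X)
    (g₁ g₂ : G) :
    ∃ f k : G, (∀ x ∈ X₁, k • (f⁻¹ • x) = f⁻¹ • (g₁ • x)) ∧
      (∀ x ∈ X₂, k • x = g₂ • x) := by
  classical
  obtain ⟨F₁, rfl⟩ := hX₁
  obtain ⟨F₂, rfl⟩ := hX₂
  have hPair : ∀ (F : Finset M) (h : G),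
      ∃ Z : Finset M, cl (↑F ∪ (fun x => h • x) '' ↑F) = cl ↑Z :=
    fun F h => ⟨F ∪ F.image (h • ·), by rw [Finset.coe_union, Finset.coe_image]⟩
  have extend := exists_smul_eq_on_cl_of_indep_cl_empty clMono clInv hMono hSym hStat hFixClEmpty
  obtain ⟨g, -, hg⟩ := hEx _ (cl ∅) _ (hPair F₁ g₁) ⟨∅, by rw [Finset.coe_empty]⟩ (hPair F₂ g₂)
  rw [← clInv, image_smul_union_image_smul, ← Finset.coe_image] at hg
  obtain ⟨k₁, hk₁, hk₁_fix⟩ := extend (F₁.image (g • ·)) (g * g₁ * g⁻¹) (hPair F₂ g₂) hg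
  obtain ⟨k₂, hk₂, hk₂_fix⟩ := extend F₂ g₂ (hPair _ _) (hSym _ _ _ hg)
  refine ⟨g⁻¹, k₁ * k₂, fun x hx => ?_, fun x hx => ?_⟩
  · have hgx : g • x ∈ cl ↑(F₁.image (g • ·)) := by
      rw [Finset.coe_image, clInv]
      exact Set.mem_image_of_mem _ hx
    rw [inv_inv, mul_smul, hk₂_fix _ (clMono _ _ Set.subset_union_left hgx), hk₁ _ hgx,
      smul_smul, smul_smul, inv_mul_cancel_right]
  · have hg₂x : g₂ • x ∈ cl (↑F₂ ∪ (fun x => g₂ • x) '' ↑F₂) := by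
      refine clMono _ _ Set.subset_union_right ?_
      rw [clInv]
      exact Set.mem_image_of_mem _ hx
    rw [mul_smul, hk₂ x hx, hk₁_fix _ hg₂x]

/-- Suppose `⫝` is a stationary independence relation on `M`
compatible with an invariant finitary closure `cl` that subsumes definable
closure, and `Aut(M)` (modelled by the group `G` acting on `M`) fixes `cl(∅)`
pointwise. Then the joint embedding property holds for partial automorphisms:
if `hᵢ : Xᵢ → Yᵢ` (`i = 1, 2`) are partial automorphisms — i.e. restrictions of
automorphisms `gᵢ` to members `Xᵢ` of `𝒳 = {cl(X) : X finite}`, with images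
`Yᵢ = gᵢ(Xᵢ)` — then there are `f ∈ Aut(M)` and a partial automorphism `h`
(extending to some `k ∈ Aut(M)`) with `f⁻¹ h₁ f ⊆ h` and `h₂ ⊆ h`. -/
theorem partial_automorphism_jep {M G : Type*} [Countable M]
    [Group G] [MulAction G M]
    (cl : Set M → Set M)
    (clExt : ∀ Z : Set M, Z ⊆ cl Z)
    (clMono : ∀ Z W : Set M, Z ⊆ W → cl Z ⊆ cl W)
    (clIdem : ∀ Z : Set M, cl (cl Z) = cl Z)
    (clInv : ∀ (g : G) (Z : Set M), cl ((fun x => g • x) '' Z) = (fun x => g • x) '' cl Z)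
    (clFin : ∀ Z : Set M, cl Z = ⋃ (Y : Finset M) (_ : ↑Y ⊆ Z), cl ↑Y)
    (clDcl : ∀ (X : Finset M) (a : M),
      (∀ g : G, (∀ x ∈ cl ↑X, g • x = x) → g • a = a) → a ∈ cl ↑X)
    (Indep : Set M → Set M → Set M → Prop)
    (hInv : ∀ (g : G) (A B C : Set M), Indep A B C →
      Indep ((fun x => g • x) '' A) ((fun x => g • x) '' B) ((fun x => g • x) '' C))
    (hMono : ∀ A B C D : Set M, Indep A B (C ∪ D) → Indep A B C ∧ Indep A (B ∪ C) D)
    (hTrans : ∀ A B C D : Set M, Indep A B C → Indep A (B ∪ C) D → Indep A B (C ∪ D))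
    (hSym : ∀ A B C : Set M, Indep A B C → Indep C B A)
    (hCompatCl : ∀ A B C : Set M, Indep A B C ↔ Indep A (cl B) C)
    (hCompat : ∀ A B C : Set M, Indep A B C ↔ Indep (cl (A ∪ B)) B C)
    (hEx : ∀ A B C : Set M, (∃ X : Finset M, A = cl ↑X) → (∃ X : Finset M, B = cl ↑X) →
      (∃ X : Finset M, C = cl ↑X) →
      ∃ g : G, (∀ x ∈ B, g • x = x) ∧ Indep ((fun x => g • x) '' A) B C)
    (hStat : ∀ A₁ A₂ B C : Set M, (∃ X : Finset M, A₁ = cl ↑X) →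
      (∃ X : Finset M, A₂ = cl ↑X) → (∃ X : Finset M, B = cl ↑X) →
      (∃ X : Finset M, C = cl ↑X) → B ⊆ A₁ → B ⊆ A₂ →
      Indep A₁ B C → Indep A₂ B C →
      ∀ g : G, (∀ x ∈ B, g • x = x) → (fun x => g • x) '' A₁ = A₂ →
        ∃ k : G, (∀ x ∈ A₁, k • x = g • x) ∧ ∀ x ∈ C, k • x = x)
    (hFixClEmpty : ∀ g : G, ∀ x ∈ cl (∅ : Set M), g • x = x)
    (X₁ X₂ : Set M)
    (hX₁ : ∃ X : Finset M, X₁ = cl ↑X) (hX₂ : ∃ X : Finset M, X₂ = cl ↑X)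
    (g₁ g₂ : G) :
    ∃ f k : G, (∀ x ∈ X₁, k • (f⁻¹ • x) = f⁻¹ • (g₁ • x)) ∧
      (∀ x ∈ X₂, k • x = g₂ • x) :=
  partial_automorphism_jep_general cl clMono clInv Indep hMono hSym hEx hStat hFixClEmpty X₁ X₂ hX₁
    hX₂ g₁ g₂
end
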